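/- arXiv:math/0307131 — 5 statements merged into one kernel-verified Lean document; each statement's English description precedes it below -/
import Mathlib

section
/- Let H be an inner product space over 𝕂 (ℝ or ℂ), let z₁,…,zₙ ∈ H and α₁,…,αₙ ∈ 𝕂. Then ‖∑_{i=1}^n αᵢ zᵢ‖² ≤ (max_{1≤i≤n} |αᵢ|²) · ∑_{i,j=1}^n |⟨zᵢ, zⱼ⟩|. -/
open Finset

section

variable {𝕜 H ι : Type*} [RCLike 𝕜] [NormedAddCommGroup H] [InnerProductSpace 𝕜 H]

theorem norm_sum_smul_sq_le_sum_sum (s : Finset ι) (α : ι → 𝕜) (z : ι → H) :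
    ‖∑ i ∈ s, α i • z i‖ ^ 2 ≤
      ∑ i ∈ s, ∑ j ∈ s, ‖α i‖ * ‖α j‖ * ‖(inner 𝕜 (z i) (z j) : 𝕜)‖ := by
  have hexpand : (‖∑ i ∈ s, α i • z i‖ ^ 2 : 𝕜) =
      ∑ i ∈ s, ∑ j ∈ s, (inner 𝕜 (α i • z i) (α j • z j) : 𝕜) := by
    rw [← inner_self_eq_norm_sq_to_K, sum_inner]
    simp only [inner_sum]
  have hterm : ∀ i j, ‖(inner 𝕜 (α i • z i) (α j • z j) : 𝕜)‖ =
      ‖α i‖ * ‖α j‖ * ‖(inner 𝕜 (z i) (z j) : 𝕜)‖ := by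
    intro i j
    rw [inner_smul_left, inner_smul_right, norm_mul, norm_mul, RCLike.norm_conj, mul_assoc]
  calc ‖∑ i ∈ s, α i • z i‖ ^ 2
      = ‖∑ i ∈ s, ∑ j ∈ s, (inner 𝕜 (α i • z i) (α j • z j) : 𝕜)‖ := by
        rw [← hexpand, ← RCLike.ofReal_pow, RCLike.norm_ofReal, abs_of_nonneg (by positivity)]
    _ ≤ ∑ i ∈ s, ∑ j ∈ s, ‖(inner 𝕜 (α i • z i) (α j • z j) : 𝕜)‖ :=
        (norm_sum_le _ _).trans (sum_le_sum fun i _ => norm_sum_le _ _)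
    _ = _ := by simp only [hterm]

theorem norm_sum_smul_sq_le_of_norm_sq_le {s : Finset ι} {α : ι → 𝕜} {M : ℝ}
    (hM : ∀ i ∈ s, ‖α i‖ ^ 2 ≤ M) (z : ι → H) :
    ‖∑ i ∈ s, α i • z i‖ ^ 2 ≤ M * ∑ i ∈ s, ∑ j ∈ s, ‖(inner 𝕜 (z i) (z j) : 𝕜)‖ := by
  have hprod : ∀ i ∈ s, ∀ j ∈ s, ‖α i‖ * ‖α j‖ ≤ M := fun i hi j hj => by
    nlinarith [hM i hi, hM j hj, two_mul_le_add_sq ‖α i‖ ‖α j‖]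
  calc ‖∑ i ∈ s, α i • z i‖ ^ 2
      ≤ ∑ i ∈ s, ∑ j ∈ s, ‖α i‖ * ‖α j‖ * ‖(inner 𝕜 (z i) (z j) : 𝕜)‖ :=
        norm_sum_smul_sq_le_sum_sum s α z
    _ ≤ ∑ i ∈ s, ∑ j ∈ s, M * ‖(inner 𝕜 (z i) (z j) : 𝕜)‖ :=
        sum_le_sum fun i hi => sum_le_sum fun j hj =>
          mul_le_mul_of_nonneg_right (hprod i hi j hj) (norm_nonneg _)
    _ = M * ∑ i ∈ s, ∑ j ∈ s, ‖(inner 𝕜 (z i) (z j) : 𝕜)‖ := by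
        simp only [mul_sum]

end

theorem stmt_0 {𝕜 H : Type*} [RCLike 𝕜] [NormedAddCommGroup H] [InnerProductSpace 𝕜 H]
    {n : ℕ} (hn : 0 < n) (z : Fin n → H) (α : Fin n → 𝕜) :
    ‖∑ i, α i • z i‖ ^ 2 ≤ (Finset.univ.sup' (Finset.univ_nonempty_iff.mpr ⟨⟨0, hn⟩⟩) (fun i => ‖α i‖ ^ 2)) * ∑ i, ∑ j, ‖(inner 𝕜 (z i) (z j) : 𝕜)‖ :=
  norm_sum_smul_sq_le_of_norm_sq_le (fun _ hi => le_sup' (fun i => ‖α i‖ ^ 2) hi) z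
end

section
/- Let H be an inner product space over 𝕂 (ℝ or ℂ), let z₁,…,zₙ ∈ H and α₁,…,αₙ ∈ 𝕂, and let p, q > 1 satisfy 1/p + 1/q = 1. Then ‖∑_{i=1}^n αᵢ zᵢ‖² ≤ (∑_{i=1}^n |αᵢ|^p)^{2/p} · (∑_{i,j=1}^n |⟨zᵢ, zⱼ⟩|^q)^{1/q}. -/
open Finset

/-!
Expanding `‖∑ αᵢ zᵢ‖² = ∑ᵢ ∑ⱼ conj αᵢ αⱼ ⟪zᵢ, zⱼ⟫` and applying the triangle inequality bounds the
square by `∑ᵢ ∑ⱼ |αᵢ| |αⱼ| |⟪zᵢ, zⱼ⟫|`. Hölder's inequality on the index set of pairs `(i, j)` then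
finishes, since `∑ᵢ ∑ⱼ (|αᵢ| |αⱼ|)^p = (∑ᵢ |αᵢ|^p)²`.
-/

theorem norm_sum_smul_sq_le_sum_sum_norm_inner {𝕜 H ι : Type*} [RCLike 𝕜] [NormedAddCommGroup H]
    [InnerProductSpace 𝕜 H] [Fintype ι] (z : ι → H) (α : ι → 𝕜) :
    ‖∑ i, α i • z i‖ ^ 2 ≤ ∑ i, ∑ j, ‖α i‖ * ‖α j‖ * ‖(inner 𝕜 (z i) (z j) : 𝕜)‖ :=
  calc ‖∑ i, α i • z i‖ ^ 2
      = RCLike.re (inner 𝕜 (∑ i, α i • z i) (∑ j, α j • z j) : 𝕜) := (inner_self_eq_norm_sq _).symm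
    _ ≤ ‖(inner 𝕜 (∑ i, α i • z i) (∑ j, α j • z j) : 𝕜)‖ := RCLike.re_le_norm _
    _ = ‖∑ i, ∑ j, starRingEnd 𝕜 (α i) * α j * (inner 𝕜 (z i) (z j) : 𝕜)‖ := by
        rw [sum_inner]
        simp only [inner_sum, inner_smul_left, inner_smul_right, mul_assoc, mul_left_comm (α _)]
    _ ≤ ∑ i, ∑ j, ‖starRingEnd 𝕜 (α i) * α j * (inner 𝕜 (z i) (z j) : 𝕜)‖ :=
        (norm_sum_le _ _).trans (sum_le_sum fun i _ => norm_sum_le _ _)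
    _ = ∑ i, ∑ j, ‖α i‖ * ‖α j‖ * ‖(inner 𝕜 (z i) (z j) : 𝕜)‖ := by
        simp only [norm_mul, RCLike.norm_conj]

theorem Real.sum_sum_rpow_mul_eq_sq {ι : Type*} [Fintype ι] {a : ι → ℝ} (ha : ∀ i, 0 ≤ a i)
    (p : ℝ) : ∑ i, ∑ j, (a i * a j) ^ p = (∑ i, a i ^ p) ^ 2 := by
  simp only [sq, sum_mul_sum, Real.mul_rpow (ha _) (ha _)]

theorem Real.sum_sum_mul_mul_le_rpow_mul_rpow {ι : Type*} [Fintype ι] {p q : ℝ}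
    (hpq : p.HolderConjugate q) {a : ι → ℝ} {b : ι → ι → ℝ} (ha : ∀ i, 0 ≤ a i)
    (hb : ∀ i j, 0 ≤ b i j) :
    ∑ i, ∑ j, a i * a j * b i j ≤
      (∑ i, a i ^ p) ^ (2 / p) * (∑ i, ∑ j, b i j ^ q) ^ (1 / q) := by
  have hholder := Real.inner_le_Lp_mul_Lq_of_nonneg (s := univ)
    (f := fun ij : ι × ι => a ij.1 * a ij.2) (g := fun ij => b ij.1 ij.2) hpq
    (fun ij _ => mul_nonneg (ha _) (ha _)) (fun ij _ => hb _ _)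
  simp only [← univ_product_univ, sum_product] at hholder
  have hS : 0 ≤ ∑ i, a i ^ p := sum_nonneg fun i _ => Real.rpow_nonneg (ha i) p
  rwa [Real.sum_sum_rpow_mul_eq_sq ha, ← Real.rpow_natCast, ← Real.rpow_mul hS, Nat.cast_ofNat,
    mul_one_div] at hholder

theorem stmt_1_general {𝕜 H : Type*} [RCLike 𝕜] [NormedAddCommGroup H] [InnerProductSpace 𝕜 H]
    {n : ℕ} (z : Fin n → H) (α : Fin n → 𝕜)
    {p q : ℝ} (hp : 1 < p) (hpq : 1 / p + 1 / q = 1) :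
    ‖∑ i, α i • z i‖ ^ 2 ≤ (∑ i, ‖α i‖ ^ p) ^ (2 / p) * (∑ i, ∑ j, ‖(inner 𝕜 (z i) (z j) : 𝕜)‖ ^ q) ^ (1 / q) := by
  have hpq' : p.HolderConjugate q := Real.holderConjugate_iff.2 ⟨hp, by simpa only [one_div] using hpq⟩
  exact (norm_sum_smul_sq_le_sum_sum_norm_inner z α).trans
    (Real.sum_sum_mul_mul_le_rpow_mul_rpow hpq' (fun i => norm_nonneg _) (fun i j => norm_nonneg _))

theorem stmt_1 {𝕜 H : Type*} [RCLike 𝕜] [NormedAddCommGroup H] [InnerProductSpace 𝕜 H]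
    {n : ℕ} (z : Fin n → H) (α : Fin n → 𝕜)
    {p q : ℝ} (hp : 1 < p) (hq : 1 < q) (hpq : 1 / p + 1 / q = 1) :
    ‖∑ i, α i • z i‖ ^ 2 ≤ (∑ i, ‖α i‖ ^ p) ^ (2 / p) * (∑ i, ∑ j, ‖(inner 𝕜 (z i) (z j) : 𝕜)‖ ^ q) ^ (1 / q) :=
  stmt_1_general z α hp hpq
end

section
/- Let H be an inner product space over 𝕂 (ℝ or ℂ), let z₁,…,zₙ ∈ H and α₁,…,αₙ ∈ 𝕂. Then ‖∑_{i=1}^n αᵢ zᵢ‖² ≤ (∑_{i=1}^n |αᵢ|²) · (∑_{i,j=1}^n |⟨zᵢ, zⱼ⟩|²)^{1/2}, and moreover (∑_{i=1}^n |αᵢ|²) · (∑_{i,j=1}^n |⟨zᵢ, zⱼ⟩|²)^{1/2} ≤ (∑_{i=1}^n |αᵢ|²) · (∑_{i=1}^n ‖zᵢ‖²), so this refines the Cauchy–Bunyakovsky–Schwarz inequality for sequences of vectors. -/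
open Finset

/-!
Expanding `‖∑ αᵢ zᵢ‖² = ∑ᵢⱼ conj αᵢ αⱼ ⟪zᵢ, zⱼ⟫` and applying the triangle inequality bounds it by
`∑ᵢⱼ |αᵢ||αⱼ| |⟪zᵢ, zⱼ⟫|`. Cauchy–Schwarz on the index set of pairs `(i, j)` turns this into
`(∑ᵢⱼ |αᵢ|²|αⱼ|²)^{1/2} (∑ᵢⱼ |⟪zᵢ, zⱼ⟫|²)^{1/2} = (∑ᵢ |αᵢ|²) (∑ᵢⱼ |⟪zᵢ, zⱼ⟫|²)^{1/2}`.
The comparison with the classical bound is Cauchy–Schwarz `|⟪zᵢ, zⱼ⟫| ≤ ‖zᵢ‖‖zⱼ‖` entrywise.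
-/

section Real

variable {ι : Type*} [Fintype ι]

theorem sum_sum_mul_mul_le_sum_sq_mul_sqrt (a : ι → ℝ) (b : ι → ι → ℝ) :
    ∑ i, ∑ j, a i * a j * b i j ≤ (∑ i, a i ^ 2) * √(∑ i, ∑ j, b i j ^ 2) := by
  have hsq : ∑ p : ι × ι, (a p.1 * a p.2) ^ 2 = (∑ i, a i ^ 2) ^ 2 := by
    simp only [Fintype.sum_prod_type, mul_pow, sq (∑ i, a i ^ 2), sum_mul_sum]
  have hcs := Real.sum_mul_le_sqrt_mul_sqrt univ (fun p : ι × ι ↦ a p.1 * a p.2)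
    (fun p ↦ b p.1 p.2)
  rwa [hsq, Real.sqrt_sq (sum_nonneg fun i _ ↦ sq_nonneg (a i)), ← univ_product_univ,
    sum_product, sum_product] at hcs

end Real

section InnerProductSpace

variable {𝕜 H ι : Type*} [RCLike 𝕜] [NormedAddCommGroup H] [InnerProductSpace 𝕜 H] [Fintype ι]

theorem norm_sum_smul_sq_le_sum_sum_norm_mul_norm_inner (z : ι → H) (α : ι → 𝕜) :
    ‖∑ i, α i • z i‖ ^ 2 ≤ ∑ i, ∑ j, ‖α i‖ * ‖α j‖ * ‖(inner 𝕜 (z i) (z j) : 𝕜)‖ := by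
  have hexpand : (inner 𝕜 (∑ i, α i • z i) (∑ j, α j • z j) : 𝕜)
      = ∑ i, ∑ j, (starRingEnd 𝕜) (α i) * α j * inner 𝕜 (z i) (z j) := by
    simp_rw [sum_inner, inner_sum, inner_smul_left, inner_smul_right, mul_assoc]
  calc ‖∑ i, α i • z i‖ ^ 2 = ‖(inner 𝕜 (∑ i, α i • z i) (∑ j, α j • z j) : 𝕜)‖ := by
        rw [inner_self_eq_norm_sq_to_K, norm_pow, RCLike.norm_ofReal, abs_norm]
    _ ≤ ∑ i, ∑ j, ‖(starRingEnd 𝕜) (α i) * α j * inner 𝕜 (z i) (z j)‖ := by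
        rw [hexpand]
        exact (norm_sum_le _ _).trans (sum_le_sum fun i _ ↦ norm_sum_le _ _)
    _ = ∑ i, ∑ j, ‖α i‖ * ‖α j‖ * ‖(inner 𝕜 (z i) (z j) : 𝕜)‖ := by
        simp only [norm_mul, RCLike.norm_conj]

theorem sum_sum_norm_inner_sq_le_sq_sum_norm_sq (z : ι → H) :
    ∑ i, ∑ j, ‖(inner 𝕜 (z i) (z j) : 𝕜)‖ ^ 2 ≤ (∑ i, ‖z i‖ ^ 2) ^ 2 := by
  rw [sq (∑ i, ‖z i‖ ^ 2), sum_mul_sum]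
  gcongr with i _ j _
  rw [← mul_pow]
  exact pow_le_pow_left₀ (norm_nonneg _) (norm_inner_le_norm _ _) 2

theorem sqrt_sum_sum_norm_inner_sq_le_sum_norm_sq (z : ι → H) :
    √(∑ i, ∑ j, ‖(inner 𝕜 (z i) (z j) : 𝕜)‖ ^ 2) ≤ ∑ i, ‖z i‖ ^ 2 :=
  (Real.sqrt_le_sqrt (sum_sum_norm_inner_sq_le_sq_sum_norm_sq z)).trans_eq
    (Real.sqrt_sq (sum_nonneg fun _ _ ↦ sq_nonneg _))

end InnerProductSpace

theorem stmt_6 {𝕜 H : Type*} [RCLike 𝕜] [NormedAddCommGroup H] [InnerProductSpace 𝕜 H]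
    {n : ℕ} (z : Fin n → H) (α : Fin n → 𝕜) :
    ‖∑ i, α i • z i‖ ^ 2 ≤ (∑ i, ‖α i‖ ^ 2) * Real.sqrt (∑ i, ∑ j, ‖(inner 𝕜 (z i) (z j) : 𝕜)‖ ^ 2) ∧
      (∑ i, ‖α i‖ ^ 2) * Real.sqrt (∑ i, ∑ j, ‖(inner 𝕜 (z i) (z j) : 𝕜)‖ ^ 2) ≤ (∑ i, ‖α i‖ ^ 2) * (∑ i, ‖z i‖ ^ 2) :=
  ⟨(norm_sum_smul_sq_le_sum_sum_norm_mul_norm_inner z α).trans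
      (sum_sum_mul_mul_le_sum_sq_mul_sqrt _ _),
    mul_le_mul_of_nonneg_left (sqrt_sum_sum_norm_inner_sq_le_sum_norm_sq z)
      (sum_nonneg fun _ _ ↦ sq_nonneg _)⟩
end

section
/- Let H be an inner product space over 𝕂 (ℝ or ℂ), let x, y₁,…,yₙ ∈ H and c₁,…,cₙ ∈ 𝕂. Then |∑_{i=1}^n cᵢ ⟨x, yᵢ⟩|² ≤ ‖x‖² · (max_{1≤i≤n} |cᵢ|²) · ∑_{i,j=1}^n |⟨yᵢ, yⱼ⟩|. -/
/-!
With `z = ∑ cᵢ • yᵢ` the sum is `⟪x, z⟫`, so Cauchy–Schwarz bounds it by `‖x‖ ‖z‖`. Expanding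
`‖z‖² = ∑ᵢ ∑ⱼ conj cᵢ cⱼ ⟪yᵢ, yⱼ⟫` and bounding `|cᵢ| |cⱼ| ≤ (|cᵢ|² + |cⱼ|²) / 2 ≤ maxₖ |cₖ|²`
termwise gives `‖z‖² ≤ maxₖ |cₖ|² · ∑ᵢ ∑ⱼ |⟪yᵢ, yⱼ⟫|`.
-/

open Finset

section

variable {𝕜 H ι : Type*} [RCLike 𝕜] [NormedAddCommGroup H] [InnerProductSpace 𝕜 H]

theorem inner_sum_smul_self (s : Finset ι) (c : ι → 𝕜) (y : ι → H) :
    (inner 𝕜 (∑ i ∈ s, c i • y i) (∑ j ∈ s, c j • y j) : 𝕜) =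
      ∑ i ∈ s, ∑ j ∈ s, starRingEnd 𝕜 (c i) * c j * inner 𝕜 (y i) (y j) := by
  rw [sum_inner]
  refine sum_congr rfl fun i _ => ?_
  rw [inner_smul_left, inner_sum, mul_sum]
  refine sum_congr rfl fun j _ => ?_
  rw [inner_smul_right, mul_assoc]

theorem norm_mul_norm_le_of_sq_le {a b : 𝕜} {M : ℝ} (ha : ‖a‖ ^ 2 ≤ M) (hb : ‖b‖ ^ 2 ≤ M) :
    ‖a‖ * ‖b‖ ≤ M := by
  nlinarith [sq_nonneg (‖a‖ - ‖b‖)]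

theorem norm_sum_smul_sq_le (s : Finset ι) (c : ι → 𝕜) (y : ι → H) {M : ℝ}
    (hc : ∀ i ∈ s, ‖c i‖ ^ 2 ≤ M) :
    ‖∑ i ∈ s, c i • y i‖ ^ 2 ≤ M * ∑ i ∈ s, ∑ j ∈ s, ‖(inner 𝕜 (y i) (y j) : 𝕜)‖ := by
  set z := ∑ i ∈ s, c i • y i
  calc ‖z‖ ^ 2 = ‖(inner 𝕜 z z : 𝕜)‖ := by simp [inner_self_eq_norm_sq_to_K]
    _ = ‖∑ i ∈ s, ∑ j ∈ s, starRingEnd 𝕜 (c i) * c j * inner 𝕜 (y i) (y j)‖ := by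
        rw [inner_sum_smul_self]
    _ ≤ ∑ i ∈ s, ∑ j ∈ s, ‖c i‖ * ‖c j‖ * ‖(inner 𝕜 (y i) (y j) : 𝕜)‖ := by
        refine (norm_sum_le _ _).trans (sum_le_sum fun i _ => (norm_sum_le _ _).trans_eq ?_)
        simp only [norm_mul, RCLike.norm_conj]
    _ ≤ ∑ i ∈ s, ∑ j ∈ s, M * ‖(inner 𝕜 (y i) (y j) : 𝕜)‖ := by
        gcongr with i hi j hj
        exact norm_mul_norm_le_of_sq_le (hc i hi) (hc j hj)
    _ = M * ∑ i ∈ s, ∑ j ∈ s, ‖(inner 𝕜 (y i) (y j) : 𝕜)‖ := by simp only [mul_sum]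

theorem norm_sum_mul_inner_sq_le (s : Finset ι) (x : H) (c : ι → 𝕜) (y : ι → H) {M : ℝ}
    (hc : ∀ i ∈ s, ‖c i‖ ^ 2 ≤ M) :
    ‖∑ i ∈ s, c i * (inner 𝕜 x (y i) : 𝕜)‖ ^ 2 ≤
      ‖x‖ ^ 2 * M * ∑ i ∈ s, ∑ j ∈ s, ‖(inner 𝕜 (y i) (y j) : 𝕜)‖ := by
  have hsum : ∑ i ∈ s, c i * (inner 𝕜 x (y i) : 𝕜) = inner 𝕜 x (∑ i ∈ s, c i • y i) := by
    simp only [inner_sum, inner_smul_right]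
  calc ‖∑ i ∈ s, c i * (inner 𝕜 x (y i) : 𝕜)‖ ^ 2 ≤ ‖x‖ ^ 2 * ‖∑ i ∈ s, c i • y i‖ ^ 2 := by
        rw [hsum, ← mul_pow]
        gcongr
        exact norm_inner_le_norm _ _
    _ ≤ ‖x‖ ^ 2 * M * ∑ i ∈ s, ∑ j ∈ s, ‖(inner 𝕜 (y i) (y j) : 𝕜)‖ := by
        rw [mul_assoc]
        gcongr
        exact norm_sum_smul_sq_le s c y hc

end

theorem stmt_7 {𝕜 H : Type*} [RCLike 𝕜] [NormedAddCommGroup H] [InnerProductSpace 𝕜 H]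
    {n : ℕ} (hn : 0 < n) (x : H) (y : Fin n → H) (c : Fin n → 𝕜) :
    ‖∑ i, c i * (inner 𝕜 x (y i) : 𝕜)‖ ^ 2 ≤ ‖x‖ ^ 2 * (Finset.univ.sup' (Finset.univ_nonempty_iff.mpr ⟨⟨0, hn⟩⟩) (fun i => ‖c i‖ ^ 2)) * ∑ i, ∑ j, ‖(inner 𝕜 (y i) (y j) : 𝕜)‖ :=
  norm_sum_mul_inner_sq_le _ x c y fun _ hi => le_sup' (fun i => ‖c i‖ ^ 2) hi
end

section
/- Let H be an inner product space over 𝕂 (ℝ or ℂ), let x, y₁,…,yₙ ∈ H and c₁,…,cₙ ∈ 𝕂, and let p, q > 1 satisfy 1/p + 1/q = 1. Then |∑_{i=1}^n cᵢ ⟨x, yᵢ⟩|² ≤ ‖x‖² · (∑_{i=1}^n |cᵢ|^p)^{2/p} · (∑_{i=1}^n ‖yᵢ‖^q)^{2/q}. -/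
open Finset

lemma norm_sum_mul_inner_le_Lp_mul_Lq {𝕜 H ι : Type*} [RCLike 𝕜] [NormedAddCommGroup H]
    [InnerProductSpace 𝕜 H] (s : Finset ι) (x : H) (y : ι → H) (c : ι → 𝕜) {p q : ℝ}
    (hpq : p.HolderConjugate q) :
    ‖∑ i ∈ s, c i * (inner 𝕜 x (y i) : 𝕜)‖ ≤
      ‖x‖ * ((∑ i ∈ s, ‖c i‖ ^ p) ^ (1 / p) * (∑ i ∈ s, ‖y i‖ ^ q) ^ (1 / q)) :=
  calc ‖∑ i ∈ s, c i * (inner 𝕜 x (y i) : 𝕜)‖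
      ≤ ∑ i ∈ s, ‖c i‖ * (‖x‖ * ‖y i‖) := by
        refine (norm_sum_le _ _).trans (sum_le_sum fun i _ => ?_)
        rw [norm_mul]
        exact mul_le_mul_of_nonneg_left (norm_inner_le_norm x (y i)) (norm_nonneg _)
    _ = ‖x‖ * ∑ i ∈ s, ‖c i‖ * ‖y i‖ := by
        rw [mul_sum]
        exact sum_congr rfl fun i _ => by ring
    _ ≤ _ := mul_le_mul_of_nonneg_left
        (Real.inner_le_Lp_mul_Lq_of_nonneg s hpq (fun i _ => norm_nonneg _)
          (fun i _ => norm_nonneg _)) (norm_nonneg _)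

lemma Real.rpow_one_div_sq {a : ℝ} (ha : 0 ≤ a) (p : ℝ) : (a ^ (1 / p)) ^ 2 = a ^ (2 / p) := by
  rw [← Real.rpow_mul_natCast ha]
  ring_nf

theorem stmt_11_general {𝕜 H : Type*} [RCLike 𝕜] [NormedAddCommGroup H] [InnerProductSpace 𝕜 H]
    {n : ℕ} (x : H) (y : Fin n → H) (c : Fin n → 𝕜)
    {p q : ℝ} (hp : 1 < p) (hpq : 1 / p + 1 / q = 1) :
    ‖∑ i, c i * (inner 𝕜 x (y i) : 𝕜)‖ ^ 2 ≤ ‖x‖ ^ 2 * (∑ i, ‖c i‖ ^ p) ^ (2 / p) * (∑ i, ‖y i‖ ^ q) ^ (2 / q) := by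
  have hpq' : p.HolderConjugate q := Real.holderConjugate_iff.mpr ⟨hp, by simpa [one_div] using hpq⟩
  have hA : 0 ≤ ∑ i, ‖c i‖ ^ p := sum_nonneg fun i _ => by positivity
  have hB : 0 ≤ ∑ i, ‖y i‖ ^ q := sum_nonneg fun i _ => by positivity
  calc ‖∑ i, c i * (inner 𝕜 x (y i) : 𝕜)‖ ^ 2
      ≤ (‖x‖ * ((∑ i, ‖c i‖ ^ p) ^ (1 / p) * (∑ i, ‖y i‖ ^ q) ^ (1 / q))) ^ 2 :=
        pow_le_pow_left₀ (norm_nonneg _) (norm_sum_mul_inner_le_Lp_mul_Lq _ x y c hpq') 2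
    _ = _ := by rw [mul_pow, mul_pow, Real.rpow_one_div_sq hA, Real.rpow_one_div_sq hB, mul_assoc]

theorem stmt_11 {𝕜 H : Type*} [RCLike 𝕜] [NormedAddCommGroup H] [InnerProductSpace 𝕜 H]
    {n : ℕ} (x : H) (y : Fin n → H) (c : Fin n → 𝕜)
    {p q : ℝ} (hp : 1 < p) (hq : 1 < q) (hpq : 1 / p + 1 / q = 1) :
    ‖∑ i, c i * (inner 𝕜 x (y i) : 𝕜)‖ ^ 2 ≤ ‖x‖ ^ 2 * (∑ i, ‖c i‖ ^ p) ^ (2 / p) * (∑ i, ‖y i‖ ^ q) ^ (2 / q) :=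
  stmt_11_general x y c hp hpq
end
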